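/- If μ ∈ Pr(𝕋) satisfies μˆμ = μ, then μ is F-invariant; that is, μ({(aˆb)ˆc : a,b,c ∈ 𝕋}) = 1, μ({sˆ((aˆb)ˆc) : s,a,b,c ∈ 𝕋}) = 1, and for every E ⊆ 𝕋, μ(x₀·E) = μ(E) and μ(x₁·E) = μ(E). -/
import Mathlib


open scoped Classical

/-- The free binary system (free magma) on one generator. -/
abbrev 𝕋 : Type := FreeMagma Unit

/-- The generator `1` of `𝕋`. -/
def e1 : 𝕋 := FreeMagma.of ()

/-- `#(t)`: the number of occurrences of the generator in `t`. -/
def cnt : 𝕋 → ℕ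
  | FreeMagma.of _ => 1
  | FreeMagma.mul a b => cnt a + cnt b

/-- The space `ℓ^∞(S)` of bounded real-valued functions on `S`. -/
def Bdd (S : Type*) : Type _ := {f : S → ℝ // ∃ M, ∀ s, |f s| ≤ M}

/-- Package a function as an element of `Bdd S` (junk value if unbounded). -/
noncomputable def liftBdd {S : Type*} (g : S → ℝ) : Bdd S :=
  if h : ∃ M, ∀ s, |g s| ≤ M then ⟨g, h⟩ else ⟨fun _ => 0, 0, fun _ => by simp⟩

/-- The constant function as an element of `Bdd S`. -/
def constB (S : Type*) (c : ℝ) : Bdd S := ⟨fun _ => c, |c|, fun _ => le_rfl⟩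

/-- The characteristic function of `E` as an element of `Bdd S`. -/
noncomputable def indB {S : Type*} (E : Set S) : Bdd S :=
  liftBdd (fun s => if s ∈ E then 1 else 0)

/-- `Pr S`: finitely additive probability measures on `S`, identified with the
positive normalized linear functionals on `ℓ^∞(S)`.  The weak* topology is the
subspace topology inherited from the product topology on `Bdd S → ℝ`. -/
def PrSet (S : Type*) : Set (Bdd S → ℝ) :=
  {φ | (∀ f g h : Bdd S, (∀ s, h.1 s = f.1 s + g.1 s) → φ h = φ f + φ g) ∧
       (∀ (c : ℝ) (f g : Bdd S), (∀ s, g.1 s = c * f.1 s) → φ g = c * φ f) ∧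
       (∀ f : Bdd S, (∀ s, 0 ≤ f.1 s) → 0 ≤ φ f) ∧
       φ (constB S 1) = 1}

/-- `μ(E)`: the measure of a set `E ⊆ S`. -/
noncomputable def mE {S : Type*} (φ : Bdd S → ℝ) (E : Set S) : ℝ := φ (indB E)

/-- The product `μ ⊗ ν` of finitely additive measures:
`μ⊗ν(f) = μ(x ↦ ν(y ↦ f(x,y)))`. -/
noncomputable def prodM {S T : Type*} (φ : Bdd S → ℝ) (ψ : Bdd T → ℝ) :
    Bdd (S × T) → ℝ :=
  fun f => φ (liftBdd fun x => ψ (liftBdd fun y => f.1 (x, y)))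

/-- The extension of a binary operation `op` on `S` to `Pr S`:
`μ⋆ν(f) = μ(x ↦ ν(y ↦ f(x ⋆ y)))`. -/
noncomputable def starM {S : Type*} (op : S → S → S) (φ ψ : Bdd S → ℝ) :
    Bdd S → ℝ :=
  fun f => φ (liftBdd fun x => ψ (liftBdd fun y => f.1 (op x y)))

/-- The extension of `ˆ` to `Pr 𝕋`. -/
noncomputable def hmul (φ ψ : Bdd 𝕋 → ℝ) : Bdd 𝕋 → ℝ := starM (· * ·) φ ψ

/-- Finitely supported probability measures: finite convex combinations of
point evaluations. -/
def FinSuppPr (S : Type*) : Set (Bdd S → ℝ) :=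
  {φ | ∃ (F : Finset S) (w : S → ℝ), (∀ s ∈ F, 0 ≤ w s) ∧ (∑ s ∈ F, w s) = 1 ∧
      ∀ f : Bdd S, φ f = ∑ s ∈ F, w s * f.1 s}

/-- `𝔸_n`: finitely supported probability measures concentrated on `𝕋_n`. -/
def Asets (n : ℕ) : Set (Bdd 𝕋 → ℝ) :=
  {φ | ∃ (F : Finset 𝕋) (w : 𝕋 → ℝ), (∀ t ∈ F, cnt t = n) ∧ (∀ t ∈ F, 0 ≤ w t) ∧
      (∑ t ∈ F, w t) = 1 ∧ ∀ f : Bdd 𝕋, φ f = ∑ t ∈ F, w t * f.1 t}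

/-- The extension of `+` on `ℕ` to ultrafilters: `A ∈ U+V` iff
`{m : {n : m+n ∈ A} ∈ V} ∈ U`. -/
noncomputable def addU (U V : Ultrafilter ℕ) : Ultrafilter ℕ :=
  U.bind fun m => V.map fun n => m + n

/-- `𝔸_U`: the `U`-limit of the sets `𝔸_m`. -/
def AU (U : Ultrafilter ℕ) : Set (Bdd 𝕋 → ℝ) :=
  {μ | μ ∈ PrSet 𝕋 ∧ ∀ W : Set (Bdd 𝕋 → ℝ), IsOpen W → μ ∈ W →
      {m : ℕ | (W ∩ Asets m).Nonempty} ∈ U}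

/-- The extension of `ˆ` to ultrafilters on `𝕋`: `E ∈ UˆV` iff
`{u : {v : uˆv ∈ E} ∈ V} ∈ U`. -/
noncomputable def umul (U V : Ultrafilter 𝕋) : Ultrafilter 𝕋 :=
  U.bind fun u => V.map fun v => u * v

/-- Substitution of measures into a term `t`:
`t(μ_0,…,μ_{m-1})(f)` is the nested integral
`μ_0(x_0 ↦ ⋯ μ_{m-1}(x_{m-1} ↦ f(t(x⃗)))⋯)`. -/
noncomputable def substM : 𝕋 → List (Bdd 𝕋 → ℝ) → (Bdd 𝕋 → ℝ)
  | FreeMagma.of _, μs => μs.headI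
  | FreeMagma.mul a b, μs =>
      hmul (substM a (μs.take (cnt a))) (substM b (μs.drop (cnt a)))

/-- `t_k`: iteratively remove the carets of `t` involving only leaves of index
greater than `k`. -/
def tk : 𝕋 → ℕ → 𝕋
  | FreeMagma.of _, _ => e1
  | FreeMagma.mul a b, k => if k < cnt a then tk a k * e1 else a * tk b (k - cnt a)

/-- `l_k(t) = #(t_k) - 2` (truncated subtraction). -/
def lk (t : 𝕋) (k : ℕ) : ℕ := cnt (tk t k) - 2

/-- The subterm `t/σ` of `t` at address `σ` (`false` = left/`0`, `true` = right/`1`). -/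
def subT : 𝕋 → List Bool → Option 𝕋
  | t, [] => some t
  | FreeMagma.of _, _ :: _ => none
  | FreeMagma.mul a b, c :: σ => if c then subT b σ else subT a σ

/-- `σ <_lex ς` for incompatible binary sequences: at the first coordinate where
they differ, `σ` has `0` and `ς` has `1`. -/
def lexLT (σ ς : List Bool) : Prop :=
  ∃ p σ' ς', σ = p ++ (false :: σ') ∧ ς = p ++ (true :: ς')

/-- `x₀·E`. -/
def x0E (E : Set 𝕋) : Set 𝕋 :=
  {x | ∃ a b c : 𝕋, x = a * (b * c) ∧ (a * b) * c ∈ E}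

/-- `x₁·E`. -/
def x1E (E : Set 𝕋) : Set 𝕋 :=
  {x | ∃ s a b c : 𝕋, x = s * (a * (b * c)) ∧ s * ((a * b) * c) ∈ E}

/-- `u_σ` for a nonempty finite binary sequence `σ`. -/
def uSeq : List Bool → 𝕋
  | [] => e1
  | [_] => e1
  | b :: σ => if b then e1 * uSeq σ else uSeq σ * e1

/-- `a ≪ b`: for some `p`, `#(a) < 2^p` and `2^p` divides `#(b)`. -/
def ll (a b : 𝕋) : Prop := ∃ p : ℕ, cnt a < 2 ^ p ∧ 2 ^ p ∣ cnt b

/-- `r↾n`: the first `n` values of `r` as a finite binary sequence. -/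
def rList (r : ℕ → Bool) (n : ℕ) : List Bool := (List.range n).map r

/-- The map `h_r : 𝕋 → 𝕋`. -/
noncomputable def hr (r : ℕ → Bool) : 𝕋 → 𝕋
  | FreeMagma.of _ => uSeq (rList r 1)
  | FreeMagma.mul a b =>
      if ll a b then hr r a * hr r b else uSeq (rList r (cnt a + cnt b))

/-- The action of `h_r` on measures: `h_r(μ)(f) = μ(f ∘ h_r)`. -/
noncomputable def hrM (r : ℕ → Bool) (φ : Bdd 𝕋 → ℝ) : Bdd 𝕋 → ℝ :=
  fun f => φ (liftBdd fun t => f.1 (hr r t))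

/-- `lev`: `l(1) = 0`, `l(aˆb) = l(a) + 1`. -/
def lev : 𝕋 → ℕ
  | FreeMagma.of _ => 0
  | FreeMagma.mul a _ => lev a + 1

/-- `C` is closed under `ˆ`. -/
def HClosed (C : Set (Bdd 𝕋 → ℝ)) : Prop := ∀ μ ∈ C, ∀ ν ∈ C, hmul μ ν ∈ C
section AuxLemmas

variable {S : Type*}

lemma liftBdd_val (g : S → ℝ) (h : ∃ M, ∀ s, |g s| ≤ M) : (liftBdd g).1 = g := by
  simp [liftBdd, h]

lemma indB_val (E : Set S) :
    (indB E).1 = fun s => if s ∈ E then (1 : ℝ) else 0 := by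
  refine liftBdd_val _ ⟨1, fun s => ?_⟩
  by_cases h : s ∈ E <;> simp [h]

lemma pr_congr {φ : Bdd S → ℝ} (hφ : φ ∈ PrSet S) {f g : Bdd S}
    (h : ∀ s, f.1 s = g.1 s) : φ f = φ g := by
  have := hφ.2.1 1 g f (fun s => by rw [one_mul, h s])
  simpa using this

lemma pr_const {φ : Bdd S → ℝ} (hφ : φ ∈ PrSet S) (c : ℝ) :
    φ (constB S c) = c := by
  have := hφ.2.1 c (constB S 1) (constB S c) (fun s => by simp [constB])
  rw [this, hφ.2.2.2, mul_one]

lemma pr_one_lift {φ : Bdd S → ℝ} (hφ : φ ∈ PrSet S) :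
    φ (liftBdd fun _ : S => (1 : ℝ)) = 1 := by
  have h : ∀ s : S, (liftBdd fun _ : S => (1 : ℝ)).1 s = (constB S 1).1 s := by
    intro s
    rw [liftBdd_val _ ⟨1, fun s => by norm_num⟩]
    rfl
  rw [pr_congr hφ h, hφ.2.2.2]

lemma pr_bound {φ : Bdd S → ℝ} (hφ : φ ∈ PrSet S) (f : Bdd S) (M : ℝ)
    (h : ∀ s, |f.1 s| ≤ M) : |φ f| ≤ M := by
  have hb1 : ∃ M', ∀ s, |M - f.1 s| ≤ M' := ⟨M + M, fun s => by
    have := abs_le.mp (h s); rw [abs_le]; constructor <;> linarith⟩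
  have hb2 : ∃ M', ∀ s, |M + f.1 s| ≤ M' := ⟨M + M, fun s => by
    have := abs_le.mp (h s); rw [abs_le]; constructor <;> linarith⟩
  have hbn : ∃ M', ∀ s, |-f.1 s| ≤ M' := ⟨M, fun s => by simpa using h s⟩
  have e1 : φ (constB S M) = M := pr_const hφ M
  have e2 : φ (constB S M) = φ (liftBdd fun s => M - f.1 s) + φ f :=
    hφ.1 _ _ _ (fun s => by rw [liftBdd_val _ hb1]; simp [constB])
  have e3 : φ (constB S M)
      = φ (liftBdd fun s => M + f.1 s) + φ (liftBdd fun s => -f.1 s) := by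
    refine hφ.1 _ _ _ (fun s => ?_)
    rw [liftBdd_val _ hb2, liftBdd_val _ hbn]
    simp [constB]
  have en : φ (liftBdd fun s => -f.1 s) = (-1) * φ f :=
    hφ.2.1 (-1) f _ (fun s => by rw [liftBdd_val _ hbn]; ring)
  have p1 : 0 ≤ φ (liftBdd fun s => M - f.1 s) := by
    refine hφ.2.2.1 _ (fun s => ?_)
    rw [liftBdd_val _ hb1]
    have := abs_le.mp (h s)
    dsimp only
    linarith [this.2]
  have p2 : 0 ≤ φ (liftBdd fun s => M + f.1 s) := by
    refine hφ.2.2.1 _ (fun s => ?_)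
    rw [liftBdd_val _ hb2]
    have := abs_le.mp (h s)
    dsimp only
    linarith [this.1]
  rw [abs_le]
  constructor <;> [nlinarith [e1, e3, en, p2]; nlinarith [e1, e2, p1]]

end AuxLemmas

section TripleExpand

variable {μ : Bdd 𝕋 → ℝ}

lemma hmul_expand (μ ν : Bdd 𝕋 → ℝ) (f : Bdd 𝕋) :
    hmul μ ν f = μ (liftBdd fun x => ν (liftBdd fun y => f.1 (x * y))) := rfl

lemma bdd_comp (f : Bdd 𝕋) (g : 𝕋 → 𝕋) : ∃ M, ∀ t, |f.1 (g t)| ≤ M :=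
  f.2.imp fun _ hM t => hM (g t)

lemma triple_right (_hμ : μ ∈ PrSet 𝕋) (hid : hmul μ μ = μ) (f : Bdd 𝕋) :
    μ f = μ (liftBdd fun x =>
      μ (liftBdd fun y => μ (liftBdd fun z => f.1 (x * (y * z))))) := by
  have key : μ f = hmul μ (hmul μ μ) f := by rw [hid, hid]
  rw [key, hmul_expand]
  refine congrArg μ (congrArg liftBdd (funext fun x => ?_))
  rw [hmul_expand]
  refine congrArg μ (congrArg liftBdd (funext fun y => ?_))
  refine congrArg μ (congrArg liftBdd (funext fun z => ?_))
  rw [liftBdd_val _ (bdd_comp f fun t => x * t)]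

lemma triple_left (hμ : μ ∈ PrSet 𝕋) (hid : hmul μ μ = μ) (f : Bdd 𝕋) :
    μ f = μ (liftBdd fun x =>
      μ (liftBdd fun y => μ (liftBdd fun z => f.1 ((x * y) * z)))) := by
  obtain ⟨M, hM⟩ := f.2
  have hG : ∀ x : 𝕋,
      |μ (liftBdd fun z => f.1 (x * z))| ≤ M := by
    intro x
    refine pr_bound hμ _ M (fun z => ?_)
    rw [liftBdd_val _ (bdd_comp f fun t => x * t)]
    exact hM _
  have hGb : ∃ M', ∀ x : 𝕋, |μ (liftBdd fun z => f.1 (x * z))| ≤ M' := ⟨M, hG⟩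
  have key : μ f = hmul (hmul μ μ) μ f := by rw [hid, hid]
  rw [key, hmul_expand, hmul_expand]
  refine congrArg μ (congrArg liftBdd (funext fun x => ?_))
  refine congrArg μ (congrArg liftBdd (funext fun y => ?_))
  rw [liftBdd_val _ hGb]

lemma quad_right (hμ : μ ∈ PrSet 𝕋) (hid : hmul μ μ = μ) (f : Bdd 𝕋) :
    μ f = μ (liftBdd fun s => μ (liftBdd fun x =>
      μ (liftBdd fun y => μ (liftBdd fun z => f.1 (s * (x * (y * z))))))) := by
  have key : μ f = hmul μ μ f := by rw [hid]
  rw [key, hmul_expand]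
  refine congrArg μ (congrArg liftBdd (funext fun s => ?_))
  rw [triple_right hμ hid (liftBdd fun t => f.1 (s * t))]
  refine congrArg μ (congrArg liftBdd (funext fun x => ?_))
  refine congrArg μ (congrArg liftBdd (funext fun y => ?_))
  refine congrArg μ (congrArg liftBdd (funext fun z => ?_))
  rw [liftBdd_val _ (bdd_comp f fun t => s * t)]

lemma quad_left (hμ : μ ∈ PrSet 𝕋) (hid : hmul μ μ = μ) (f : Bdd 𝕋) :
    μ f = μ (liftBdd fun s => μ (liftBdd fun x =>
      μ (liftBdd fun y => μ (liftBdd fun z => f.1 (s * ((x * y) * z)))))) := by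
  have key : μ f = hmul μ μ f := by rw [hid]
  rw [key, hmul_expand]
  refine congrArg μ (congrArg liftBdd (funext fun s => ?_))
  rw [triple_left hμ hid (liftBdd fun t => f.1 (s * t))]
  refine congrArg μ (congrArg liftBdd (funext fun x => ?_))
  refine congrArg μ (congrArg liftBdd (funext fun y => ?_))
  refine congrArg μ (congrArg liftBdd (funext fun z => ?_))
  rw [liftBdd_val _ (bdd_comp f fun t => s * t)]

end TripleExpand

lemma tmul_inj {a b c d : 𝕋} (h : a * b = c * d) : a = c ∧ b = d := by
  rw [← FreeMagma.mul_eq, ← FreeMagma.mul_eq] at h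
  injection h with h1 h2
  exact ⟨h1, h2⟩

/-- Proposition 3.3: an idempotent `μ ∈ Pr(𝕋)` is `F`-invariant. -/
theorem idempotent_is_F_invariant (μ : Bdd 𝕋 → ℝ) (hμ : μ ∈ PrSet 𝕋)
    (hid : hmul μ μ = μ) :
    mE μ {t : 𝕋 | ∃ a b c : 𝕋, t = (a * b) * c} = 1 ∧
    mE μ {t : 𝕋 | ∃ s a b c : 𝕋, t = s * ((a * b) * c)} = 1 ∧
    ∀ E : Set 𝕋, mE μ (x0E E) = mE μ E ∧ mE μ (x1E E) = mE μ E := by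
  refine ⟨?_, ?_, ?_⟩
  · rw [mE, triple_left hμ hid]
    have h3 : ∀ x y : 𝕋,
        (fun z => (indB {t : 𝕋 | ∃ a b c : 𝕋, t = (a * b) * c}).1 ((x * y) * z))
          = fun _ : 𝕋 => (1 : ℝ) := by
      intro x y; funext z; rw [indB_val]; exact if_pos ⟨x, y, z, rfl⟩
    simp only [h3, pr_one_lift hμ]
  · rw [mE, quad_left hμ hid]
    have h4 : ∀ s x y : 𝕋,
        (fun z => (indB {t : 𝕋 | ∃ s a b c : 𝕋, t = s * ((a * b) * c)}).1
            (s * ((x * y) * z))) = fun _ : 𝕋 => (1 : ℝ) := by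
      intro s x y; funext z; rw [indB_val]; exact if_pos ⟨s, x, y, z, rfl⟩
    simp only [h4, pr_one_lift hμ]
  · intro E
    constructor
    · rw [mE, mE, triple_right hμ hid (indB (x0E E)), triple_left hμ hid (indB E)]
      refine congrArg μ (congrArg liftBdd (funext fun x => ?_))
      refine congrArg μ (congrArg liftBdd (funext fun y => ?_))
      refine congrArg μ (congrArg liftBdd (funext fun z => ?_))
      rw [indB_val, indB_val]
      dsimp only
      by_cases h : (x * y) * z ∈ E
      · rw [if_pos ⟨x, y, z, rfl, h⟩, if_pos h]
      · rw [if_neg ?_, if_neg h]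
        rintro ⟨a, b, c, heq, hm⟩
        obtain ⟨h1, h2⟩ := tmul_inj heq
        obtain ⟨h3, h4⟩ := tmul_inj h2
        subst h1; subst h3; subst h4
        exact h hm
    · rw [mE, mE, quad_right hμ hid (indB (x1E E)), quad_left hμ hid (indB E)]
      refine congrArg μ (congrArg liftBdd (funext fun s => ?_))
      refine congrArg μ (congrArg liftBdd (funext fun x => ?_))
      refine congrArg μ (congrArg liftBdd (funext fun y => ?_))
      refine congrArg μ (congrArg liftBdd (funext fun z => ?_))
      rw [indB_val, indB_val]
      dsimp only
      by_cases h : s * ((x * y) * z) ∈ E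
      · rw [if_pos ⟨s, x, y, z, rfl, h⟩, if_pos h]
      · rw [if_neg ?_, if_neg h]
        rintro ⟨s', a, b, c, heq, hm⟩
        obtain ⟨h0, h2⟩ := tmul_inj heq
        obtain ⟨h1, h2⟩ := tmul_inj h2
        obtain ⟨h3, h4⟩ := tmul_inj h2
        subst h0; subst h1; subst h3; subst h4
        exact h hm
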